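/- arXiv:1202.3329 — 2 statements merged into one kernel-verified Lean document; each statement's English description precedes it below -/
import Mathlib

section
/- If σ and τ are density matrices with Sp(σ) ⪰ Sp(τ) (σ majorizes τ), then there exists a bi-stochastic measurement {f_k}_{k=1}^m, i.e., operators with Σ_k f_k* f_k = Id and Σ_k f_k f_k* = Id, such that τ = Σ_k f_k σ f_k* (Uhlmann's theorem, 'only if' direction of the characterization). -/
/-
Uhlmann's theorem reduces to the Hardy–Littlewood–Pólya theorem. If `λ(τ) = D λ(σ)` for a doubly
stochastic matrix `D`, and `σ = U diag λ(σ) U*`, `τ = V diag λ(τ) V*`, then the operators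
`f_ij = √(D i j) V |i⟩⟨j| U*` take `σ` to `τ`, and the column and row sums of `D` give
`∑ f* f = 1` and `∑ f f* = 1`.

The matrix `D` is a product of Robin Hood transfers. While `x ≠ y`, let `k` be the first
coordinate where `x` falls short of `y` and `j < k` one where `x` exceeds `y`; moving
`min (x j - y j) (y k - x k)` from `x j` to `x k` keeps the prefix sums of `x` above those of `y`
and makes one more coordinate agree with `y`.
-/

open scoped ComplexOrder

open Matrix Finset in
/-- `u` rearranged in decreasing order. -/
noncomputable def sortDesc {n : ℕ} (u : Fin n → ℝ) : Fin n → ℝ :=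
  fun i => u (Tuple.sort u i.rev)

open Finset in
/-- `u` majorizes `v`: every partial sum of the decreasing rearrangement of `u`
dominates that of `v`, and the total sums agree. -/
noncomputable def Majorizes {n : ℕ} (u v : Fin n → ℝ) : Prop :=
  (∀ k : ℕ, ∑ i ∈ Finset.univ.filter (fun i : Fin n => (i : ℕ) < k), sortDesc v i ≤
      ∑ i ∈ Finset.univ.filter (fun i : Fin n => (i : ℕ) < k), sortDesc u i) ∧
  ∑ i, u i = ∑ i, v i

open Finset Matrix

noncomputable def prefixSum {n : ℕ} (x : Fin n → ℝ) (k : ℕ) : ℝ :=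
  ∑ i ∈ univ.filter (fun i : Fin n => (i : ℕ) < k), x i

lemma prefixSum_succ {n : ℕ} (x : Fin n → ℝ) (k : Fin n) :
    prefixSum x (k + 1) = prefixSum x k + x k := by
  have : univ.filter (fun i : Fin n => (i : ℕ) < k + 1) =
      insert k (univ.filter (fun i : Fin n => (i : ℕ) < k)) := by
    ext i
    simp only [mem_filter, mem_univ, true_and, mem_insert, Fin.ext_iff]
    omega
  rw [prefixSum, this, sum_insert (by simp), add_comm, prefixSum]

lemma prefixSum_add_single_sub_single {n : ℕ} (x : Fin n → ℝ) (j k : Fin n) (δ : ℝ) (m : ℕ) :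
    prefixSum (x + Pi.single k δ - Pi.single j δ) m =
      prefixSum x m + (if (k : ℕ) < m then δ else 0) - (if (j : ℕ) < m then δ else 0) := by
  simp [prefixSum, sum_add_distrib, sum_sub_distrib, Finset.sum_pi_single']

lemma exists_mem_doublyStochastic_mulVec_eq_add_single_sub_single {n : Type*} [Fintype n]
    [DecidableEq n] (x : n → ℝ) (j k : n) {δ : ℝ} (hδ₀ : 0 ≤ δ) (hδ : δ ≤ x j - x k) :
    ∃ T ∈ doublyStochastic ℝ n, T *ᵥ x = x + Pi.single k δ - Pi.single j δ := by
  set θ := δ / (x j - x k)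
  have hθ : θ * (x j - x k) = δ := by
    rcases (sub_nonneg.mp (hδ₀.trans hδ)).eq_or_lt with h | h
    · rw [h, sub_self, mul_zero]; linarith
    · exact div_mul_cancel₀ _ (sub_pos.mpr h).ne'
  have hθ₀ : 0 ≤ θ := div_nonneg hδ₀ (hδ₀.trans hδ)
  have hθ₁ : θ ≤ 1 := div_le_one_of_le₀ hδ (hδ₀.trans hδ)
  refine ⟨(1 - θ) • 1 + θ • (Equiv.swap j k).permMatrix ℝ,
    convex_doublyStochastic (one_mem _) permMatrix_mem_doublyStochastic (by linarith) hθ₀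
      (by ring), ?_⟩
  ext i
  simp only [add_mulVec, smul_mulVec, one_mulVec, permMatrix_mulVec, Pi.add_apply,
    Pi.sub_apply, Pi.smul_apply, Function.comp_apply, smul_eq_mul, Pi.single_apply]
  rcases eq_or_ne i j with rfl | hij
  · rcases eq_or_ne i k with rfl | hik
    · simp only [Equiv.swap_self, Equiv.refl_apply, if_true, add_sub_cancel_right]; ring
    · simp only [Equiv.swap_apply_left, hik, if_true, if_false, add_zero]; linarith
  · rcases eq_or_ne i k with rfl | hik
    · simp only [Equiv.swap_apply_right, hij, if_true, if_false, sub_zero]; linarith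
    · simp only [Equiv.swap_apply_of_ne_of_ne hij hik, hij, hik, if_false, add_zero, sub_zero]
      ring

section Transfer

variable {n : ℕ} {x y : Fin n → ℝ}

lemma exists_transfer_pair (hle : ∀ m, prefixSum y m ≤ prefixSum x m)
    (hsum : ∑ i, x i = ∑ i, y i) (hne : x ≠ y) :
    ∃ j k, j < k ∧ y j < x j ∧ x k < y k ∧ ∀ l < k, y l ≤ x l := by
  have hdeficit : ∃ k, x k < y k := by
    by_contra! h
    exact hne (funext fun i =>
      ((sum_eq_sum_iff_of_le fun i _ => h i).mp hsum.symm i (mem_univ i)).symm)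
  obtain ⟨k, hk : x k < y k, hmin⟩ := wellFounded_lt.has_min {k | x k < y k} hdeficit
  have hmin' : ∀ l < k, y l ≤ x l := fun l hl => not_lt.mp fun h => hmin l h hl
  have hlt : prefixSum y k < prefixSum x k := by
    have := hle (k + 1)
    rw [prefixSum_succ, prefixSum_succ] at this
    linarith
  obtain ⟨j, hj, hyx⟩ := exists_lt_of_sum_lt hlt
  exact ⟨j, k, Fin.lt_def.mpr (mem_filter.mp hj).2, hyx, hk, hmin'⟩

lemma prefixSum_le_prefixSum_transfer (hle : ∀ m, prefixSum y m ≤ prefixSum x m)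
    {j k : Fin n} (hjk : j < k) (hmin : ∀ l < k, y l ≤ x l) {δ : ℝ}
    (hδ : δ ≤ x j - y j) (m : ℕ) :
    prefixSum y m ≤ prefixSum (x + Pi.single k δ - Pi.single j δ) m := by
  rw [prefixSum_add_single_sub_single]
  by_cases hkm : (k : ℕ) < m
  · simp only [hkm, lt_trans (Fin.lt_def.mp hjk) hkm, if_true]
    linarith [hle m]
  by_cases hjm : (j : ℕ) < m
  · -- below `k` every term of `x - y` is nonnegative, and the `j`-th one is at least `δ`
    have : x j - y j ≤ prefixSum x m - prefixSum y m := by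
      rw [prefixSum, prefixSum, ← sum_sub_distrib]
      refine single_le_sum (f := fun i => x i - y i) (fun i hi => ?_) (by simpa using hjm)
      have : i < k := Fin.lt_def.mpr (by have := (mem_filter.mp hi).2; omega)
      linarith [hmin i this]
    simp only [hkm, hjm, if_true, if_false]
    linarith
  · simp only [hkm, hjm, if_false]
    linarith [hle m]

lemma card_filter_ne_transfer_lt {j k : Fin n} (hjk : j ≠ k) (hj : y j < x j) (hk : x k < y k)
    {δ : ℝ} (hδ : δ = x j - y j ∨ δ = y k - x k) :
    #(univ.filter fun i => (x + Pi.single k δ - Pi.single j δ : Fin n → ℝ) i ≠ y i) <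
      #(univ.filter fun i => x i ≠ y i) := by
  set x' := x + Pi.single k δ - Pi.single j δ
  have hx'j : x' j = x j - δ := by simp [x', hjk]
  have hx'k : x' k = x k + δ := by simp [x', hjk.symm]
  have hx' : ∀ i, i ≠ j → i ≠ k → x' i = x i := fun i hij hik => by simp [x', hij, hik]
  apply card_lt_card
  rw [ssubset_iff_of_subset]
  · rcases hδ with h | h
    · exact ⟨j, by simp [hj.ne'], by simp [hx'j, h]⟩
    · exact ⟨k, by simp [hk.ne], by simp [hx'k, h]⟩
  · intro i hi
    simp only [mem_filter, mem_univ, true_and] at hi ⊢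
    rcases eq_or_ne i j with rfl | hij
    · exact hj.ne'
    rcases eq_or_ne i k with rfl | hik
    · exact hk.ne
    rwa [← hx' i hij hik]

lemma exists_mem_doublyStochastic_mulVec_eq_of_prefixSum_le (hy : Antitone y)
    (hle : ∀ m, prefixSum y m ≤ prefixSum x m) (hsum : ∑ i, x i = ∑ i, y i) :
    ∃ D ∈ doublyStochastic ℝ (Fin n), D *ᵥ x = y := by
  induction hN : #(univ.filter fun i => x i ≠ y i) using Nat.strong_induction_on generalizing x
    with
  | _ N ih =>
  by_cases hxy : x = y
  · exact ⟨1, one_mem _, by rw [one_mulVec, hxy]⟩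
  obtain ⟨j, k, hjk, hj, hk, hmin⟩ := exists_transfer_pair hle hsum hxy
  set δ := min (x j - y j) (y k - x k)
  have hδ₀ : 0 ≤ δ := le_min (by linarith) (by linarith)
  have hδ : δ ≤ x j - x k := (min_le_left _ _).trans (by linarith [hy hjk.le])
  obtain ⟨T, hT, hTx⟩ := exists_mem_doublyStochastic_mulVec_eq_add_single_sub_single x j k hδ₀ hδ
  obtain ⟨D, hD, hDx⟩ := ih _ (hN ▸ card_filter_ne_transfer_lt hjk.ne hj hk (min_choice _ _))
    (prefixSum_le_prefixSum_transfer hle hjk hmin (min_le_left _ _))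
    (by simp [sum_add_distrib, sum_sub_distrib, hsum]) rfl
  exact ⟨D * T, mul_mem hD hT, by rw [← mulVec_mulVec, hTx, hDx]⟩

end Transfer

lemma sortDesc_eq_permMatrix_mulVec {n : ℕ} (u : Fin n → ℝ) :
    sortDesc u = (Tuple.sort u * Fin.revPerm).permMatrix ℝ *ᵥ u := by
  rw [permMatrix_mulVec]; rfl

lemma antitone_sortDesc {n : ℕ} (u : Fin n → ℝ) : Antitone (sortDesc u) :=
  fun _ _ hij => Tuple.monotone_sort u (Fin.rev_le_rev.mpr hij)

lemma sum_sortDesc {n : ℕ} (u : Fin n → ℝ) : ∑ i, sortDesc u i = ∑ i, u i :=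
  Equiv.sum_comp (Tuple.sort u * Fin.revPerm) u

/-- Hardy–Littlewood–Pólya. -/
lemma Majorizes.exists_mem_doublyStochastic_mulVec_eq {n : ℕ} {u v : Fin n → ℝ}
    (h : Majorizes u v) : ∃ D ∈ doublyStochastic ℝ (Fin n), D *ᵥ u = v := by
  obtain ⟨D, hD, hDu⟩ := exists_mem_doublyStochastic_mulVec_eq_of_prefixSum_le
    (antitone_sortDesc v) h.1 (by rw [sum_sortDesc, sum_sortDesc, h.2])
  set α := Tuple.sort u * Fin.revPerm
  set β := Tuple.sort v * Fin.revPerm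
  refine ⟨β⁻¹.permMatrix ℝ * D * α.permMatrix ℝ,
    mul_mem (mul_mem permMatrix_mem_doublyStochastic hD) permMatrix_mem_doublyStochastic, ?_⟩
  rw [← mulVec_mulVec, ← mulVec_mulVec, ← sortDesc_eq_permMatrix_mulVec, hDu,
    permMatrix_mulVec]
  ext i
  exact congrArg v (β.apply_symm_apply i)

section Kraus

variable {𝕜 n : Type*} [RCLike 𝕜] [Fintype n] [DecidableEq n]

lemma sum_single_fst_eq_diagonal {α : Type*} [AddCommMonoid α] (f : n × n → α) :
    ∑ p, single p.1 p.1 (f p) = diagonal fun i => ∑ j, f (i, j) := by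
  rw [Fintype.sum_prod_type, ← sum_single_eq_diagonal]
  exact sum_congr rfl fun i _ => (map_sum (singleAddMonoidHom (α := α) i i) _ _).symm

lemma sum_single_snd_eq_diagonal {α : Type*} [AddCommMonoid α] (f : n × n → α) :
    ∑ p, single p.2 p.2 (f p) = diagonal fun j => ∑ i, f (i, j) := by
  rw [Fintype.sum_prod_type_right, ← sum_single_eq_diagonal]
  exact sum_congr rfl fun j _ => (map_sum (singleAddMonoidHom (α := α) j j) _ _).symm

lemma ofReal_sqrt_mul_star {a : ℝ} (ha : 0 ≤ a) : (√a : 𝕜) * star (√a : 𝕜) = a := by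
  rw [RCLike.star_def, RCLike.conj_ofReal, ← RCLike.ofReal_mul, Real.mul_self_sqrt ha]

noncomputable def diagonalKraus (D : Matrix n n ℝ) (p : n × n) : Matrix n n 𝕜 :=
  single p.1 p.2 (√(D p.1 p.2) : 𝕜)

variable {D : Matrix n n ℝ}

lemma sum_conjTranspose_diagonalKraus_mul (hD : D ∈ doublyStochastic ℝ n) :
    ∑ p, (diagonalKraus D p : Matrix n n 𝕜)ᴴ * diagonalKraus D p = 1 := by
  have h : ∀ p : n × n, (diagonalKraus D p : Matrix n n 𝕜)ᴴ * diagonalKraus D p =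
      single p.2 p.2 ((D p.1 p.2 : ℝ) : 𝕜) := fun p => by
    rw [diagonalKraus, conjTranspose_single, single_mul_single_same, mul_comm,
      ofReal_sqrt_mul_star (nonneg_of_mem_doublyStochastic hD)]
  rw [sum_congr rfl fun p _ => h p, sum_single_snd_eq_diagonal]
  simp_rw [← RCLike.ofReal_sum, sum_col_of_mem_doublyStochastic hD]
  simp

lemma sum_diagonalKraus_mul_conjTranspose (hD : D ∈ doublyStochastic ℝ n) :
    ∑ p, (diagonalKraus D p : Matrix n n 𝕜) * (diagonalKraus D p)ᴴ = 1 := by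
  have h : ∀ p : n × n, (diagonalKraus D p : Matrix n n 𝕜) * (diagonalKraus D p)ᴴ =
      single p.1 p.1 ((D p.1 p.2 : ℝ) : 𝕜) := fun p => by
    rw [diagonalKraus, conjTranspose_single, single_mul_single_same,
      ofReal_sqrt_mul_star (nonneg_of_mem_doublyStochastic hD)]
  rw [sum_congr rfl fun p _ => h p, sum_single_fst_eq_diagonal]
  simp_rw [← RCLike.ofReal_sum, sum_row_of_mem_doublyStochastic hD]
  simp

lemma sum_diagonalKraus_mul_diagonal_mul_conjTranspose (hD : ∀ i j, 0 ≤ D i j) (a : n → ℝ) :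
    ∑ p, (diagonalKraus D p : Matrix n n 𝕜) * diagonal (RCLike.ofReal ∘ a) *
      (diagonalKraus D p)ᴴ = diagonal (RCLike.ofReal ∘ (D *ᵥ a)) := by
  have h : ∀ p : n × n, (diagonalKraus D p : Matrix n n 𝕜) * diagonal (RCLike.ofReal ∘ a) *
      (diagonalKraus D p)ᴴ = single p.1 p.1 ((D p.1 p.2 * a p.2 : ℝ) : 𝕜) := fun p => by
    rw [diagonalKraus, conjTranspose_single, single_mul_mul_single, diagonal_apply_eq,
      Function.comp_apply, mul_right_comm, ofReal_sqrt_mul_star (hD _ _), RCLike.ofReal_mul]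
  rw [sum_congr rfl fun p _ => h p, sum_single_fst_eq_diagonal]
  simp_rw [← RCLike.ofReal_sum]
  rfl

end Kraus

section UnitaryConj

variable {𝕜 ι n : Type*} [RCLike 𝕜] [Fintype ι] [Fintype n] [DecidableEq n]
  {U V : Matrix n n 𝕜} (f : ι → Matrix n n 𝕜)

lemma sum_unitary_conj_mul_conj_mul_conjTranspose (hU : Uᴴ * U = 1) (A : Matrix n n 𝕜) :
    ∑ k, (V * f k * Uᴴ) * (U * A * Uᴴ) * (V * f k * Uᴴ)ᴴ = V * (∑ k, f k * A * (f k)ᴴ) * Vᴴ := by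
  rw [mul_sum, sum_mul]
  refine sum_congr rfl fun k _ => ?_
  simp only [conjTranspose_mul, conjTranspose_conjTranspose, Matrix.mul_assoc]
  rw [← Matrix.mul_assoc Uᴴ U, hU, Matrix.one_mul, ← Matrix.mul_assoc Uᴴ U, hU, Matrix.one_mul]

lemma sum_unitary_conj_mul_conjTranspose (hU : Uᴴ * U = 1) (hV : V * Vᴴ = 1)
    (h : ∑ k, f k * (f k)ᴴ = 1) : ∑ k, (V * f k * Uᴴ) * (V * f k * Uᴴ)ᴴ = 1 := by
  calc _ = ∑ k, V * (f k * (f k)ᴴ) * Vᴴ := sum_congr rfl fun k _ => by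
        simp only [conjTranspose_mul, conjTranspose_conjTranspose, Matrix.mul_assoc]
        rw [← Matrix.mul_assoc Uᴴ U, hU, Matrix.one_mul]
    _ = 1 := by rw [← sum_mul, ← mul_sum, h, Matrix.mul_one, hV]

lemma sum_conjTranspose_unitary_conj_mul (hU : U * Uᴴ = 1) (hV : Vᴴ * V = 1)
    (h : ∑ k, (f k)ᴴ * f k = 1) : ∑ k, (V * f k * Uᴴ)ᴴ * (V * f k * Uᴴ) = 1 := by
  calc _ = ∑ k, U * ((f k)ᴴ * f k) * Uᴴ := sum_congr rfl fun k _ => by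
        simp only [conjTranspose_mul, conjTranspose_conjTranspose, Matrix.mul_assoc]
        rw [← Matrix.mul_assoc Vᴴ V, hV, Matrix.one_mul]
    _ = 1 := by rw [← sum_mul, ← mul_sum, h, Matrix.mul_one, hU]

end UnitaryConj

lemma Matrix.IsHermitian.eq_eigenvectorUnitary_mul_diagonal_mul_conjTranspose {𝕜 n : Type*}
    [RCLike 𝕜] [Fintype n] [DecidableEq n] {A : Matrix n n 𝕜} (hA : A.IsHermitian) :
    A = (hA.eigenvectorUnitary : Matrix n n 𝕜) * diagonal (RCLike.ofReal ∘ hA.eigenvalues) *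
      (hA.eigenvectorUnitary : Matrix n n 𝕜)ᴴ := by
  conv_lhs => rw [hA.spectral_theorem]
  rfl

lemma Matrix.IsHermitian.exists_bistochastic_kraus_of_mulVec_eigenvalues_eq {𝕜 n : Type*}
    [RCLike 𝕜] [Fintype n] [DecidableEq n] {A B : Matrix n n 𝕜} (hA : A.IsHermitian)
    (hB : B.IsHermitian) {D : Matrix n n ℝ} (hD : D ∈ doublyStochastic ℝ n)
    (hDAB : D *ᵥ hA.eigenvalues = hB.eigenvalues) :
    ∃ f : n × n → Matrix n n 𝕜, (∑ p, (f p)ᴴ * f p = 1) ∧ (∑ p, f p * (f p)ᴴ = 1) ∧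
      B = ∑ p, f p * A * (f p)ᴴ := by
  set U := (hA.eigenvectorUnitary : Matrix n n 𝕜)
  set V := (hB.eigenvectorUnitary : Matrix n n 𝕜)
  have hU := hA.eigenvectorUnitary.2
  have hV := hB.eigenvectorUnitary.2
  refine ⟨fun p => V * diagonalKraus D p * Uᴴ,
    sum_conjTranspose_unitary_conj_mul _ (Unitary.mul_star_self_of_mem hU)
      (Unitary.star_mul_self_of_mem hV) (sum_conjTranspose_diagonalKraus_mul hD),
    sum_unitary_conj_mul_conjTranspose _ (Unitary.star_mul_self_of_mem hU)
      (Unitary.mul_star_self_of_mem hV) (sum_diagonalKraus_mul_conjTranspose hD), ?_⟩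
  rw [hA.eq_eigenvectorUnitary_mul_diagonal_mul_conjTranspose,
    sum_unitary_conj_mul_conj_mul_conjTranspose _ (Unitary.star_mul_self_of_mem hU),
    sum_diagonalKraus_mul_diagonal_mul_conjTranspose
      (fun _ _ => nonneg_of_mem_doublyStochastic hD), hDAB]
  exact hB.eq_eigenvectorUnitary_mul_diagonal_mul_conjTranspose

open Matrix in
theorem exists_bistochastic_measurement_of_majorizes_general {n : ℕ}
    (σ τ : Matrix (Fin n) (Fin n) ℂ)
    (hσ : σ.PosSemidef)
    (hτ : τ.PosSemidef)
    (hmaj : Majorizes (hσ.1.eigenvalues) (hτ.1.eigenvalues)) :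
    ∃ (m : ℕ) (f : Fin m → Matrix (Fin n) (Fin n) ℂ),
      (∑ k, (f k)ᴴ * f k = 1) ∧ (∑ k, f k * (f k)ᴴ = 1) ∧
      τ = ∑ k, f k * σ * (f k)ᴴ := by
  obtain ⟨D, hD, hDστ⟩ := hmaj.exists_mem_doublyStochastic_mulVec_eq
  obtain ⟨f, hf₁, hf₂, hfστ⟩ :=
    hσ.1.exists_bistochastic_kraus_of_mulVec_eigenvalues_eq hτ.1 hD hDστ
  set e := (Fintype.equivFin (Fin n × Fin n)).symm
  exact ⟨_, fun k => f (e k), (Equiv.sum_comp e _).trans hf₁, (Equiv.sum_comp e _).trans hf₂,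
    hfστ.trans (Equiv.sum_comp e fun p => f p * σ * (f p)ᴴ).symm⟩

open Matrix in
/-- Uhlmann: if the spectrum of the density matrix `σ` majorizes that of `τ`, then `τ` is
obtained from `σ` by a bi-stochastic measurement. -/
theorem exists_bistochastic_measurement_of_majorizes {n : ℕ}
    (σ τ : Matrix (Fin n) (Fin n) ℂ)
    (hσ : σ.PosSemidef) (hσtr : σ.trace = 1)
    (hτ : τ.PosSemidef) (hτtr : τ.trace = 1)
    (hmaj : Majorizes (hσ.1.eigenvalues) (hτ.1.eigenvalues)) :
    ∃ (m : ℕ) (f : Fin m → Matrix (Fin n) (Fin n) ℂ),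
      (∑ k, (f k)ᴴ * f k = 1) ∧ (∑ k, f k * (f k)ᴴ = 1) ∧
      τ = ∑ k, f k * σ * (f k)ᴴ :=
  exists_bistochastic_measurement_of_majorizes_general σ τ hσ hτ hmaj
end

section
/- If a vector μ of nonnegative reals equals B λ for a doubly stochastic matrix B, then λ majorizes μ. -/
/-!
Let `T` index the `k` largest entries of `μ = Bλ`. Then `∑_{i ∈ T} μ i = ∑ j, t j * λ j` with
weights `t j = ∑_{i ∈ T} B i j`, which lie in `[0, 1]` and add up to `#T`. Among all such
weightings the sum is largest when the weights are `1` on the `#T` largest entries of `λ` and `0`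
elsewhere, which gives the partial-sum inequalities. The column sums give equality of the totals.
-/

open Finset Matrix

theorem sum_mul_le_sum_of_threshold {ι : Type*} [Fintype ι] [DecidableEq ι] (T : Finset ι)
    (x t : ι → ℝ) (ht₀ : ∀ j, 0 ≤ t j) (ht₁ : ∀ j, t j ≤ 1) (ht : ∑ j, t j = #T) (c : ℝ)
    (hT : ∀ j ∈ T, c ≤ x j) (hTc : ∀ j ∉ T, x j ≤ c) :
    ∑ j, t j * x j ≤ ∑ j ∈ T, x j := by
  have hpoint : ∀ j, t j * (x j - c) ≤ if j ∈ T then x j - c else 0 := by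
    intro j
    split_ifs with hj
    · nlinarith [hT j hj, ht₁ j]
    · nlinarith [hTc j hj, ht₀ j]
  have hsum := sum_le_sum fun j (_ : j ∈ univ) => hpoint j
  simp only [mul_sub, sum_sub_distrib, ← sum_mul, ht, sum_ite_mem, univ_inter,
    sum_const, nsmul_eq_mul] at hsum
  linarith

theorem Matrix.sum_mulVec_apply {m n R : Type*} [Fintype n] [NonUnitalNonAssocSemiring R]
    (B : Matrix m n R) (S : Finset m) (x : n → R) :
    ∑ i ∈ S, (B *ᵥ x) i = ∑ j, (∑ i ∈ S, B i j) * x j := by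
  simp only [mulVec, dotProduct, sum_mul]
  exact sum_comm

section SortDesc

variable {n : ℕ}

noncomputable def descPerm (u : Fin n → ℝ) : Equiv.Perm (Fin n) :=
  Fin.revPerm.trans (Tuple.sort u)

theorem sortDesc_antitone (u : Fin n → ℝ) : Antitone (sortDesc u) :=
  fun _ _ h => Tuple.monotone_sort u (Fin.rev_le_rev.mpr h)

/-- The indices of the `k` largest entries of `u` (all of them if `n ≤ k`). -/
noncomputable def topIndices (u : Fin n → ℝ) (k : ℕ) : Finset (Fin n) :=
  (univ.filter fun i : Fin n => (i : ℕ) < k).map (descPerm u).toEmbedding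

theorem card_topIndices (u : Fin n → ℝ) (k : ℕ) :
    #(topIndices u k) = #(univ.filter fun i : Fin n => (i : ℕ) < k) :=
  card_map _

theorem sum_sortDesc_filter_lt (u : Fin n → ℝ) (k : ℕ) :
    ∑ i ∈ univ.filter (fun i : Fin n => (i : ℕ) < k), sortDesc u i =
      ∑ j ∈ topIndices u k, u j := by
  rw [topIndices, sum_map]
  rfl

theorem exists_threshold_topIndices (u : Fin n → ℝ) (k : ℕ) :
    ∃ c, (∀ j ∈ topIndices u k, c ≤ u j) ∧ ∀ j ∉ topIndices u k, u j ≤ c := by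
  rcases n.eq_zero_or_pos with rfl | hn
  · exact ⟨0, fun j => j.elim0, fun j => j.elim0⟩
  -- For `k = 0` the truncated `k - 1` is `0`, so `c` is the largest entry, as it must be.
  refine ⟨sortDesc u ⟨min (k - 1) (n - 1), by omega⟩, ?_, fun j hj => ?_⟩
  · simp only [topIndices, mem_map, mem_filter, mem_univ, true_and]
    rintro _ ⟨i, hik, rfl⟩
    exact sortDesc_antitone u (Fin.mk_le_mk.mpr (by omega))
  · obtain ⟨i, rfl⟩ := (descPerm u).surjective j
    have hki : k ≤ (i : ℕ) := by
      by_contra! hik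
      exact hj (mem_map_of_mem _ (by simpa using hik))
    exact sortDesc_antitone u (Fin.mk_le_mk.mpr (by omega))

end SortDesc

open Matrix in
/-- If `μ = B λ` for a doubly stochastic matrix `B`, then `λ` majorizes `μ`. -/
theorem majorizes_of_doublyStochastic {n : ℕ} (B : Matrix (Fin n) (Fin n) ℝ)
    (hnonneg : ∀ i j, 0 ≤ B i j)
    (hrow : ∀ i, ∑ j, B i j = 1) (hcol : ∀ j, ∑ i, B i j = 1)
    (lam mu : Fin n → ℝ) (hmu : mu = B.mulVec lam) :
    Majorizes lam mu := by
  subst hmu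
  refine ⟨fun k => ?_, by simpa [hcol] using (B.sum_mulVec_apply univ lam).symm⟩
  obtain ⟨c, hcT, hcTc⟩ := exists_threshold_topIndices lam k
  rw [sum_sortDesc_filter_lt, sum_sortDesc_filter_lt, sum_mulVec_apply]
  refine sum_mul_le_sum_of_threshold _ _ _ (fun j => sum_nonneg fun i _ => hnonneg i j)
    (fun j => ?_) ?_ c hcT hcTc
  · exact (sum_le_sum_of_subset_of_nonneg (subset_univ _) fun i _ _ => hnonneg i j).trans_eq
      (hcol j)
  · rw [sum_comm, card_topIndices, ← card_topIndices (B *ᵥ lam) k]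
    simp [hrow]
end
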